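/- Let n ∈ ℕ and let T : ℝ[x₁,…,xₙ] → ℝ[x₁,…,xₙ] be a linear map with canonical representation T = Σ_{α∈ℕ₀ⁿ} q_α · ∂^α, i.e., T p = Σ_α q_α · ∂^α p for all p, with unique polynomials q_α ∈ ℝ[x₁,…,xₙ]. Then the following are equivalent: (i) T maps the space of polynomials of total degree at most d into itself for every d ∈ ℕ₀; (ii) the total degree of q_α is at most |α| for every α ∈ ℕ₀ⁿ. -/

import Mathlib

/-!
`∂^α x^β` is a multiple of `x^(β - α)` that vanishes unless `α ≤ β`, so `q_α ∂^α` does not raise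
the degree when `deg q_α ≤ |α|`; this gives (ii) ⇒ (i). Conversely
`T x^α = α! q_α + Σ_{β < α} q_β ∂^β x^α`, and well-founded induction on `α` (in the product
order) bounds the degree of the lower terms by `|α|`, hence that of `q_α`.
-/

open MvPolynomial MeasureTheory

/-- The iterated partial derivative operator `∂^α = ∂₁^{α₁}⋯∂ₙ^{αₙ}` on `ℝ[x₁,…,xₙ]`. -/
noncomputable def pdPow {n : ℕ} (α : Fin n →₀ ℕ) :
    Module.End ℝ (MvPolynomial (Fin n) ℝ) :=
  (List.ofFn fun i : Fin n =>
    ((pderiv i : Derivation ℝ (MvPolynomial (Fin n) ℝ) (MvPolynomial (Fin n) ℝ)).toLinearMap) ^ (α i)).prod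

section IteratedPartialDerivatives

variable {σ R : Type*} [CommSemiring R]

lemma pderiv_pow_monomial (i : σ) (k : ℕ) (β : σ →₀ ℕ) (c : R) :
    ((pderiv i : Derivation R (MvPolynomial σ R) (MvPolynomial σ R)).toLinearMap ^ k)
      (monomial β c) = monomial (β - Finsupp.single i k) (c * (β i).descFactorial k) := by
  induction k with
  | zero => simp
  | succ k ih =>
    rw [pow_succ', Module.End.mul_apply, ih]
    simp only [Derivation.coeFn_coe, pderiv_monomial]
    congr 1
    · rw [tsub_tsub, ← Finsupp.single_add]
    · simp only [Finsupp.coe_tsub, Pi.sub_apply, Finsupp.single_eq_same, Nat.descFactorial_succ,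
        Nat.cast_mul]
      ring

lemma list_sum_single_apply_of_notMem {M : Type*} [AddCommMonoid M] (f : σ → M) {L : List σ}
    {i : σ} (hi : i ∉ L) : (L.map fun j => Finsupp.single j (f j)).sum i = 0 := by
  induction L with
  | nil => simp
  | cons j L ih =>
    simp only [List.mem_cons, not_or] at hi
    simp [Ne.symm hi.1, ih hi.2]

lemma list_prod_pderiv_pow_monomial (α β : σ →₀ ℕ) (c : R) {L : List σ} (hL : L.Nodup) :
    (L.map fun i =>
      (pderiv i : Derivation R (MvPolynomial σ R) (MvPolynomial σ R)).toLinearMap ^ α i).prod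
      (monomial β c)
    = monomial (β - (L.map fun j => Finsupp.single j (α j)).sum)
        (c * (L.map fun j => ((β j).descFactorial (α j) : R)).prod) := by
  induction L with
  | nil => simp
  | cons i L ih =>
    obtain ⟨hi, hL⟩ := List.nodup_cons.mp hL
    rw [List.map_cons, List.prod_cons, Module.End.mul_apply, ih hL, pderiv_pow_monomial]
    have hβi : (β - (L.map fun j => Finsupp.single j (α j)).sum) i = β i := by
      rw [Finsupp.tsub_apply, list_sum_single_apply_of_notMem α hi, Nat.sub_zero]
    simp only [List.map_cons, List.sum_cons, List.prod_cons, tsub_tsub, hβi]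
    congr 1
    · rw [add_comm]
    · ring

end IteratedPartialDerivatives

lemma totalDegree_mul_C {R σ : Type*} [CommRing R] [IsDomain R] (p : MvPolynomial σ R)
    {c : R} (hc : c ≠ 0) : (p * C c).totalDegree = p.totalDegree := by
  rcases eq_or_ne p 0 with rfl | hp
  · simp
  · rw [totalDegree_mul_of_isDomain hp (C_ne_zero.mpr hc), totalDegree_C, add_zero]

section PdPow

variable {n : ℕ}

lemma pdPow_monomial (α β : Fin n →₀ ℕ) (c : ℝ) :
    pdPow α (monomial β c) = monomial (β - α) (c * ∏ i, ((β i).descFactorial (α i) : ℝ)) := by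
  rw [pdPow, List.ofFn_eq_map, list_prod_pderiv_pow_monomial α β c (List.nodup_finRange n),
    ← List.ofFn_eq_map, ← List.ofFn_eq_map, List.sum_ofFn, List.prod_ofFn]
  congr
  ext i
  simp

lemma pdPow_monomial_of_not_le {α β : Fin n →₀ ℕ} (h : ¬α ≤ β) (c : ℝ) :
    pdPow α (monomial β c) = 0 := by
  obtain ⟨i, hi⟩ : ∃ i, β i < α i := by simpa [Finsupp.le_def] using h
  rw [pdPow_monomial, Finset.prod_eq_zero (Finset.mem_univ i)
    (by rw [Nat.descFactorial_eq_zero_iff_lt.mpr hi, Nat.cast_zero]), mul_zero, map_zero]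

lemma pdPow_monomial_self (α : Fin n →₀ ℕ) (c : ℝ) :
    pdPow α (monomial α c) = C (c * ∏ i, ((α i).factorial : ℝ)) := by
  simp only [pdPow_monomial, tsub_self, Nat.descFactorial_self, ← C_apply]

lemma totalDegree_mul_pdPow_monomial_le {Q : MvPolynomial (Fin n) ℝ} {α : Fin n →₀ ℕ}
    (hQ : Q.totalDegree ≤ α.degree) (β : Fin n →₀ ℕ) (c : ℝ) :
    (Q * pdPow α (monomial β c)).totalDegree ≤ β.degree := by
  by_cases h : α ≤ β
  · rw [pdPow_monomial]
    calc (Q * monomial (β - α) _).totalDegree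
        ≤ Q.totalDegree + (monomial (β - α) _).totalDegree := totalDegree_mul _ _
      _ ≤ α.degree + (β - α).degree := add_le_add hQ (totalDegree_monomial_le _ _)
      _ = β.degree := by rw [← map_add, add_tsub_cancel_of_le h]
  · simp [pdPow_monomial_of_not_le h]

lemma totalDegree_mul_pdPow_le {Q : MvPolynomial (Fin n) ℝ} {α : Fin n →₀ ℕ}
    (hQ : Q.totalDegree ≤ α.degree) (p : MvPolynomial (Fin n) ℝ) :
    (Q * pdPow α p).totalDegree ≤ p.totalDegree := by
  conv_lhs => rw [p.as_sum, map_sum, Finset.mul_sum]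
  refine (totalDegree_finsetSum _ _).trans (Finset.sup_le fun β hβ => ?_)
  exact (totalDegree_mul_pdPow_monomial_le hQ β _).trans (le_totalDegree hβ)

lemma finsum_mul_pdPow_monomial (q : (Fin n →₀ ℕ) → MvPolynomial (Fin n) ℝ)
    (β : Fin n →₀ ℕ) (c : ℝ) :
    ∑ᶠ α, q α * pdPow α (monomial β c) = ∑ α ∈ Finset.Iic β, q α * pdPow α (monomial β c) := by
  refine finsum_eq_sum_of_support_subset _ fun α hα => ?_
  by_contra hle
  simp_all [pdPow_monomial_of_not_le]

lemma totalDegree_finsum_mul_pdPow_le {q : (Fin n →₀ ℕ) → MvPolynomial (Fin n) ℝ}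
    (hq : ∀ α, (q α).totalDegree ≤ α.degree) {p : MvPolynomial (Fin n) ℝ}
    (hfin : (Function.support fun α => q α * pdPow α p).Finite) :
    (∑ᶠ α, q α * pdPow α p).totalDegree ≤ p.totalDegree := by
  rw [finsum_eq_sum _ hfin]
  exact (totalDegree_finsetSum _ _).trans
    (Finset.sup_le fun α _ => totalDegree_mul_pdPow_le (hq α) p)

lemma totalDegree_le_of_totalDegree_finsum_mul_pdPow_le
    {q : (Fin n →₀ ℕ) → MvPolynomial (Fin n) ℝ}
    (h : ∀ β, (∑ᶠ α, q α * pdPow α (monomial β 1)).totalDegree ≤ β.degree)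
    (α : Fin n →₀ ℕ) : (q α).totalDegree ≤ α.degree := by
  induction α using WellFoundedLT.induction with
  | _ α ih =>
  set c : ℝ := ∏ i, ((α i).factorial : ℝ)
  set lower := ∑ β ∈ Finset.Iio α, q β * pdPow β (monomial α 1)
  have hsplit : q α * C c = ∑ᶠ β, q β * pdPow β (monomial α 1) - lower := by
    rw [finsum_mul_pdPow_monomial, ← Finset.Iio_insert, Finset.sum_insert Finset.notMem_Iio_self,
      pdPow_monomial_self, one_mul, add_sub_cancel_right]
  have hlower : lower.totalDegree ≤ α.degree :=
    (totalDegree_finsetSum _ _).trans <| Finset.sup_le fun β hβ =>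
      totalDegree_mul_pdPow_monomial_le (ih β (Finset.mem_Iio.mp hβ)) α 1
  have hc : c ≠ 0 := Finset.prod_ne_zero_iff.mpr fun i _ => by positivity
  rw [← totalDegree_mul_C _ hc, hsplit]
  exact (totalDegree_sub _ _).trans (max_le (h α) hlower)

end PdPow

theorem degree_preserving_iff_general (n : ℕ)
    (T : MvPolynomial (Fin n) ℝ →ₗ[ℝ] MvPolynomial (Fin n) ℝ)
    (q : (Fin n →₀ ℕ) → MvPolynomial (Fin n) ℝ)
    (hq : ∀ p : MvPolynomial (Fin n) ℝ,
      (Function.support fun α => q α * pdPow α p).Finite ∧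
      T p = ∑ᶠ α, q α * pdPow α p) :
    (∀ d : ℕ, ∀ p : MvPolynomial (Fin n) ℝ, p.totalDegree ≤ d → (T p).totalDegree ≤ d) ↔
    (∀ α : Fin n →₀ ℕ, (q α).totalDegree ≤ ∑ i, α i) := by
  simp only [← Finsupp.degree_eq_sum]
  constructor
  · intro hpres
    refine totalDegree_le_of_totalDegree_finsum_mul_pdPow_le fun β => ?_
    rw [← (hq _).2]
    exact hpres _ _ (totalDegree_monomial_le β 1)
  · intro hdeg d p hp
    rw [(hq p).2]
    exact (totalDegree_finsum_mul_pdPow_le hdeg (hq p).1).trans hp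

/-- A linear map `T = Σ_α q_α ⬝ ∂^α` on `ℝ[x₁,…,xₙ]` preserves all the spaces of polynomials of
total degree at most `d` if and only if `deg q_α ≤ |α|` for all `α ∈ ℕ₀ⁿ`. -/
theorem degree_preserving_iff (n : ℕ) (hn : 0 < n)
    (T : MvPolynomial (Fin n) ℝ →ₗ[ℝ] MvPolynomial (Fin n) ℝ)
    (q : (Fin n →₀ ℕ) → MvPolynomial (Fin n) ℝ)
    (hq : ∀ p : MvPolynomial (Fin n) ℝ,
      (Function.support fun α => q α * pdPow α p).Finite ∧
      T p = ∑ᶠ α, q α * pdPow α p) :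
    (∀ d : ℕ, ∀ p : MvPolynomial (Fin n) ℝ, p.totalDegree ≤ d → (T p).totalDegree ≤ d) ↔
    (∀ α : Fin n →₀ ℕ, (q α).totalDegree ≤ ∑ i, α i) :=
  degree_preserving_iff_general n T q hq
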